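/- Let Σ and Λ be alphabets, let L be a positive integer, let A, B : Σ → Λ^L assign to each symbol a block of length L, and let a = a_1 ⋯ a_n ∈ Σ^n and b = b_1 ⋯ b_m ∈ Σ^m. Assume α ∈ (0, 1/7), β ∈ [0, 1/7), α ≥ β, R > 0, and that for all i ∈ {1,…,n}, j ∈ {1,…,m} and all substrings C of A(a_i) and D of B(b_j) consisting of consecutive symbols with |C|, |D| ≥ L/R: f̄(C, D) ≥ α if a_i ≠ b_j, and f̄(C, D) ≥ β if a_i = b_j. Let f̃ = f̃(a_1 a_2 ⋯ a_n, b_1 b_2 ⋯ b_m). Then f̄(A(a_1)A(a_2)⋯A(a_n), B(b_1)B(b_2)⋯B(b_m)) > α·f̃ + β·(1 − f̃) − 2/R. -/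

import Mathlib

open MeasureTheory

namespace Paper

variable {σ : Type*}

/-- The concatenation of `t` copies of the string `w`. -/
def rep (w : List σ) (t : ℕ) : List σ := (List.replicate t w).flatten

/-- `I` is a match between the strings `a` and `b` (with 0-based indices):
a collection of pairs of indices, strictly increasing in both coordinates,
pairing equal symbols. -/
def IsMatch (a b : List σ) (I : List (ℕ × ℕ)) : Prop :=
  I.Chain' (fun p q => p.1 < q.1 ∧ p.2 < q.2) ∧
  ∀ p ∈ I, p.1 < a.length ∧ p.2 < b.length ∧ a[p.1]? = b[p.2]?

/-- The largest cardinality of a match between `a` and `b`. -/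
noncomputable def maxMatch (a b : List σ) : ℕ :=
  sSup {r | ∃ I, IsMatch a b I ∧ I.length = r}

/-- The `f̄` distance between two strings. -/
noncomputable def fbar (a b : List σ) : ℝ :=
  1 - 2 * (maxMatch a b : ℝ) / (a.length + b.length)

/-- `I` is an approximate match between the strings `a` and `b` (0-based indices):
pairs of indices, nondecreasing in each coordinate and strictly increasing as pairs,
pairing equal symbols, such that the set of indices paired with any given index is
contained in a set of three consecutive indices. -/
def IsApproxMatch (a b : List σ) (I : List (ℕ × ℕ)) : Prop :=
  I.Chain' (fun p q => p.1 ≤ q.1 ∧ p.2 ≤ q.2 ∧ p ≠ q) ∧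
  (∀ p ∈ I, p.1 < a.length ∧ p.2 < b.length ∧ a[p.1]? = b[p.2]?) ∧
  (∀ p ∈ I, (∃ s, ∀ q ∈ I, q.1 = p.1 → q.2 ∈ ({s, s+1, s+2} : Set ℕ)) ∧
            (∃ t, ∀ q ∈ I, q.2 = p.2 → q.1 ∈ ({t, t+1, t+2} : Set ℕ)))

/-- The largest cardinality of an approximate match between `a` and `b`. -/
noncomputable def maxApproxMatch (a b : List σ) : ℕ :=
  sSup {r | ∃ I, IsApproxMatch a b I ∧ I.length = r}

/-- The approximate distance `f̃` between two strings. -/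
noncomputable def ftilde (a b : List σ) : ℝ :=
  max 0 (1 - 2 * (maxApproxMatch a b : ℝ) / (a.length + b.length))

end Paper

/-!
Take a maximum match `I` of the two concatenations and group its pairs by the pair of blocks
`(i, j)` they fall in. As `I` is increasing, the occupied block pairs ("cells") form a chain in the
product order, so there are fewer than `n + m` of them, and the stretches of `A aᵢ` used by the
cells of one row of blocks are disjoint, so their extents `x` add up to at most `L` (likewise the
extents `y` in a column). Applied to these stretches, the hypothesis shows that a cell holding
`c` pairs satisfies `2c ≤ (1 - α)(x + y)`, or `2c ≤ (1 - β)(x + y)` if `aᵢ = bⱼ`, or `c ≤ L/R`.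

Only the cells of the second kind that violate the first bound ("balanced" cells) beat the
`α`-level, each by at most `(α - β)(x + y)`. Scanning them in order and keeping each one that is
compatible with those kept before yields an approximate match of `a` and `b`. A row of blocks
holding a kept cell gains at most `(α - β)L`. Any other row holding a balanced cell is blocked by
a kept cell at least three rows earlier in the same column, and is charged to that column. The
two rows right after the blocker of the first row charged to a column meet no other column, so
what they leave of the bound `(1 - α)L`, together with the slack of their cells, pays for the
gains of all rows charged to that column; this is where `α < 1/7` is used. Adding up rows and
columns bounds `2|I|` by `(1 - α)(n + m)L + 2(α - β)L·(maxApproxMatch a b) + 2(n + m)L/R`, and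
the cell bounds directly give `(1 - β)(n + m)L + 2(n + m)L/R`; together this is the claim.
-/

section Lists

open List

theorem List.length_le_of_pairwise_lt {l : List ℕ} (hl : l.Pairwise (· < ·)) {lo N : ℕ}
    (h : ∀ v ∈ l, lo ≤ v ∧ v < lo + N) : l.length ≤ N := by
  simpa using (Nodup.subperm (hl.imp ne_of_lt) fun v hv => mem_range'_1.2 (h v hv)).length_le

namespace Paper

variable {σ : Type*}

theorem IsMatch.pairwise {a b : List σ} {I : List (ℕ × ℕ)} (h : IsMatch a b I) :
    I.Pairwise fun u v => u.1 < v.1 ∧ u.2 < v.2 :=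
  have : IsTrans (ℕ × ℕ) fun u v => u.1 < v.1 ∧ u.2 < v.2 :=
    ⟨fun _ _ _ h₁ h₂ => ⟨h₁.1.trans h₂.1, h₁.2.trans h₂.2⟩⟩
  isChain_iff_pairwise.mp h.1

theorem IsMatch.sublist {a b : List σ} {I S : List (ℕ × ℕ)} (h : IsMatch a b I) (hS : S <+ I) :
    IsMatch a b S :=
  ⟨(h.pairwise.sublist hS).isChain, fun u hu => h.2 u (hS.subset hu)⟩

theorem IsMatch.length_le {a b : List σ} {I : List (ℕ × ℕ)} (h : IsMatch a b I) :
    I.length ≤ a.length := by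
  simpa using length_le_of_pairwise_lt (h.pairwise.map Prod.fst fun _ _ h => h.1) (lo := 0)
    (by simpa using fun u hu => (h.2 u hu).1)

theorem bddAbove_match_lengths (a b : List σ) :
    BddAbove {r | ∃ I, IsMatch a b I ∧ I.length = r} :=
  ⟨a.length, by rintro _ ⟨I, hI, rfl⟩; exact hI.length_le⟩

theorem exists_isMatch_length_eq_maxMatch (a b : List σ) :
    ∃ I, IsMatch a b I ∧ I.length = maxMatch a b :=
  Nat.sSup_mem (s := {r | ∃ I, IsMatch a b I ∧ I.length = r}) ⟨0, [], ⟨isChain_nil, by simp⟩, rfl⟩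
    (bddAbove_match_lengths a b)

theorem IsMatch.length_le_maxMatch {a b : List σ} {I : List (ℕ × ℕ)} (h : IsMatch a b I) :
    I.length ≤ maxMatch a b :=
  le_csSup (bddAbove_match_lengths a b) ⟨I, h, rfl⟩

theorem IsMatch.two_mul_length_le {a b : List σ} {I : List (ℕ × ℕ)} (h : IsMatch a b I)
    {γ : ℝ} (hγ : γ ≤ fbar a b) (hab : 0 < (a.length : ℝ) + b.length) :
    2 * (I.length : ℝ) ≤ (1 - γ) * (a.length + b.length) := by
  have hI : (I.length : ℝ) ≤ maxMatch a b := by exact_mod_cast h.length_le_maxMatch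
  rw [fbar, le_sub_iff_add_le, ← le_sub_iff_add_le', div_le_iff₀ hab] at hγ
  linarith

theorem IsApproxMatch.length_le {a b : List σ} {J : List (ℕ × ℕ)} (h : IsApproxMatch a b J) :
    J.length ≤ a.length * b.length := by
  have : IsTrans (ℕ × ℕ) fun u v => u.1 ≤ v.1 ∧ u.2 ≤ v.2 ∧ u ≠ v :=
    ⟨fun u v w h₁ h₂ => ⟨h₁.1.trans h₂.1, h₁.2.1.trans h₂.2.1, fun huw =>
      h₁.2.2 (Prod.ext (h₁.1.antisymm (huw ▸ h₂.1)) (h₁.2.1.antisymm (huw ▸ h₂.2.1)))⟩⟩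
  have hJ : J.Nodup := (isChain_iff_pairwise.mp h.1).imp fun h => h.2.2
  rw [← toFinset_card_of_nodup hJ, ← Finset.card_range a.length, ← Finset.card_range b.length,
    ← Finset.card_product]
  exact Finset.card_le_card fun u hu => by
    simpa using And.intro (h.2.1 u (mem_toFinset.1 hu)).1 (h.2.1 u (mem_toFinset.1 hu)).2.1

theorem IsApproxMatch.length_le_maxApproxMatch {a b : List σ} {J : List (ℕ × ℕ)}
    (h : IsApproxMatch a b J) : J.length ≤ maxApproxMatch a b :=
  le_csSup ⟨a.length * b.length, by rintro _ ⟨J, hJ, rfl⟩; exact hJ.length_le⟩ ⟨J, h, rfl⟩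

end Paper

section Extent

def extent (l : List ℕ) : ℕ := l.getLastD 0 + 1 - l.headD 0

variable {l : List ℕ}

theorem List.headD_mem (hne : l ≠ []) : l.headD 0 ∈ l := by
  cases l with
  | nil => exact absurd rfl hne
  | cons a t => exact mem_cons_self

theorem List.getLastD_mem (hne : l ≠ []) : l.getLastD 0 ∈ l := by
  rw [getLastD_eq_getLast?, getLast?_eq_some_getLast hne]
  exact getLast_mem hne

theorem List.headD_le_of_mem (hl : l.Pairwise (· < ·)) {v : ℕ} (hv : v ∈ l) : l.headD 0 ≤ v := by
  cases l with
  | nil => cases hv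
  | cons a t => exact (hl.imp le_of_lt).rel_head hv

theorem List.le_getLastD_of_mem (hl : l.Pairwise (· < ·)) {v : ℕ} (hv : v ∈ l) :
    v ≤ l.getLastD 0 := by
  rw [getLastD_eq_getLast?, getLast?_eq_some_getLast (ne_nil_of_mem hv)]
  exact (hl.imp le_of_lt).rel_getLast hv

theorem mem_Ico_extent (hl : l.Pairwise (· < ·)) {v : ℕ} (hv : v ∈ l) :
    l.headD 0 ≤ v ∧ v < l.headD 0 + extent l := by
  have := headD_le_of_mem hl hv; have := le_getLastD_of_mem hl hv
  unfold extent; omega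

theorem length_le_extent (hl : l.Pairwise (· < ·)) : l.length ≤ extent l :=
  length_le_of_pairwise_lt hl fun _ hv => mem_Ico_extent hl hv

theorem extent_subset_Ico (hne : l ≠ []) {lo N : ℕ} (h : ∀ v ∈ l, lo ≤ v ∧ v < lo + N) :
    lo ≤ l.headD 0 ∧ l.headD 0 + extent l ≤ lo + N := by
  have := h _ (headD_mem hne); have := h _ (getLastD_mem hne)
  unfold extent; omega

theorem extent_eq_card_Icc : extent l = (Finset.Icc (l.headD 0) (l.getLastD 0)).card := by
  rw [Nat.card_Icc]; rfl

theorem sum_extent_le {ι : Type*} (F : Finset ι) (l : ι → List ℕ)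
    (hne : ∀ i ∈ F, l i ≠ []) {lo N : ℕ}
    (hmem : ∀ i ∈ F, ∀ v ∈ l i, lo ≤ v ∧ v < lo + N)
    (hsep : ∀ i ∈ F, ∀ j ∈ F, i ≠ j →
      (∀ u ∈ l i, ∀ v ∈ l j, u < v) ∨ (∀ u ∈ l j, ∀ v ∈ l i, u < v)) :
    ∑ i ∈ F, extent (l i) ≤ N := by
  classical
  have hdisj :
      (F : Set ι).PairwiseDisjoint fun i => Finset.Icc ((l i).headD 0) ((l i).getLastD 0) := by
    intro i hi j hj hij
    refine Finset.disjoint_left.2 fun v hvi hvj => ?_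
    rw [Finset.mem_Icc] at hvi hvj
    rcases hsep i hi j hj hij with h | h
    · have := h _ (getLastD_mem (hne i hi)) _ (headD_mem (hne j hj)); omega
    · have := h _ (getLastD_mem (hne j hj)) _ (headD_mem (hne i hi)); omega
  have hsub : F.biUnion (fun i => Finset.Icc ((l i).headD 0) ((l i).getLastD 0)) ⊆
      Finset.Ico lo (lo + N) := by
    intro v hv
    obtain ⟨i, hi, hv⟩ := Finset.mem_biUnion.1 hv
    have := hmem i hi _ (headD_mem (hne i hi))
    have := hmem i hi _ (getLastD_mem (hne i hi))
    rw [Finset.mem_Icc] at hv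
    rw [Finset.mem_Ico]; omega
  simp_rw [extent_eq_card_Icc]
  rw [← Finset.card_biUnion hdisj]
  simpa using Finset.card_le_card hsub

end Extent

theorem Finset.exists_pairwise_lt_of_isChain {α : Type*} [PartialOrder α] (s : Finset α)
    (hs : IsChain (· ≤ ·) (s : Set α)) : ∃ l : List α, l.Pairwise (· < ·) ∧ ∀ a, a ∈ l ↔ a ∈ s := by
  classical
  induction s using Finset.strongInduction with
  | H s ih =>
    rcases s.eq_empty_or_nonempty with rfl | hne
    · exact ⟨[], by simp⟩
    obtain ⟨m, hm⟩ := s.exists_maximal hne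
    obtain ⟨l, hl, hmem⟩ := ih (s.erase m) (Finset.erase_ssubset hm.1)
      (hs.mono (by simp))
    have hlt : ∀ a ∈ l, a < m := fun a ha => by
      obtain ⟨ham, has⟩ := Finset.mem_erase.1 ((hmem a).1 ha)
      rcases hs.total has hm.1 with h | h
      · exact lt_of_le_of_ne h ham
      · exact absurd (le_antisymm (hm.2 has h) h) ham
    refine ⟨l ++ [m], pairwise_append.2 ⟨hl, pairwise_singleton _ _, ?_⟩, fun a => ?_⟩
    · simpa using hlt
    · by_cases ha : a = m <;> simp [hmem, ha, hm.1]

section WindowSelection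

def WindowCompatible (u t : ℕ × ℕ) : Prop :=
  (u.1 = t.1 → t.2 ≤ u.2 + 2) ∧ (u.2 = t.2 → t.1 ≤ u.1 + 2)

instance : DecidableRel WindowCompatible := fun _ _ => inferInstanceAs (Decidable (_ ∧ _))

theorem not_windowCompatible_iff {u t : ℕ × ℕ} :
    ¬ WindowCompatible u t ↔ (u.1 = t.1 ∧ u.2 + 2 < t.2) ∨ (u.2 = t.2 ∧ u.1 + 2 < t.1) := by
  unfold WindowCompatible; omega

theorem windowCompatible_swap {u t : ℕ × ℕ} :
    WindowCompatible u.swap t.swap ↔ WindowCompatible u t := by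
  unfold WindowCompatible; simp only [Prod.fst_swap, Prod.snd_swap]; tauto

theorem windowCompatible_of_le {u t : ℕ × ℕ} (h : t ≤ u) : WindowCompatible u t := by
  rw [Prod.le_def] at h; unfold WindowCompatible; omega

def selectWindow (acc : List (ℕ × ℕ)) : List (ℕ × ℕ) → List (ℕ × ℕ)
  | [] => acc
  | t :: ts => selectWindow (if ∀ u ∈ acc, WindowCompatible u t then acc ++ [t] else acc) ts

theorem exists_selectWindow_eq_append (l : List (ℕ × ℕ)) :
    ∀ acc, ∃ l', l' <+ l ∧ selectWindow acc l = acc ++ l' := by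
  induction l with
  | nil => exact fun acc => ⟨[], nil_sublist _, by simp [selectWindow]⟩
  | cons t ts ih =>
    intro acc
    by_cases h : ∀ u ∈ acc, WindowCompatible u t
    · obtain ⟨l', hl', he⟩ := ih (acc ++ [t])
      exact ⟨t :: l', hl'.cons_cons t, by rw [selectWindow, if_pos h, he]; simp⟩
    · obtain ⟨l', hl', he⟩ := ih acc
      exact ⟨l', hl'.cons t, by rw [selectWindow, if_neg h, he]⟩

theorem selectWindow_sublist (l : List (ℕ × ℕ)) : selectWindow [] l <+ l := by
  obtain ⟨l', hl', he⟩ := exists_selectWindow_eq_append l []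
  simpa [he] using hl'

theorem subset_selectWindow (acc l : List (ℕ × ℕ)) : acc ⊆ selectWindow acc l := by
  obtain ⟨l', -, he⟩ := exists_selectWindow_eq_append l acc
  rw [he]; exact subset_append_left _ _

theorem exists_not_windowCompatible_of_not_mem {l : List (ℕ × ℕ)} :
    ∀ {acc t}, t ∈ l → t ∉ selectWindow acc l →
      ∃ u ∈ selectWindow acc l, ¬ WindowCompatible u t := by
  induction l with
  | nil => simp
  | cons s ts ih =>
    intro acc t ht hnot
    rcases mem_cons.1 ht with rfl | hts
    · rw [selectWindow] at hnot ⊢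
      by_cases h : ∀ u ∈ acc, WindowCompatible u t
      · rw [if_pos h] at hnot
        exact absurd (subset_selectWindow _ ts (by simp)) hnot
      · rw [if_neg h]
        push Not at h
        obtain ⟨u, hu, hut⟩ := h
        exact ⟨u, subset_selectWindow acc ts hu, hut⟩
    · exact ih hts hnot

theorem windowCompatible_of_mem_selectWindow {l : List (ℕ × ℕ)} (hl : l.Pairwise (· < ·)) :
    ∀ {acc}, (∀ u ∈ acc, ∀ v ∈ l, u < v) → (∀ u ∈ acc, ∀ v ∈ acc, WindowCompatible u v) →
      ∀ u ∈ selectWindow acc l, ∀ v ∈ selectWindow acc l, WindowCompatible u v := by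
  induction l with
  | nil => exact fun _ h => h
  | cons t ts ih =>
    intro acc hlt hacc
    obtain ⟨ht, hts⟩ := pairwise_cons.1 hl
    by_cases h : ∀ u ∈ acc, WindowCompatible u t
    · rw [selectWindow, if_pos h]
      refine ih hts ?_ ?_
      · intro u hu v hv
        rcases mem_append.1 hu with hu | hu
        · exact hlt u hu v (mem_cons_of_mem t hv)
        · exact (mem_singleton.1 hu) ▸ ht v hv
      · intro u hu v hv
        rcases mem_append.1 hu with hu | hu <;> rcases mem_append.1 hv with hv | hv
        · exact hacc u hu v hv
        · exact (mem_singleton.1 hv) ▸ h u hu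
        · exact windowCompatible_of_le ((mem_singleton.1 hu) ▸ (hlt v hv t mem_cons_self).le)
        · exact (mem_singleton.1 hu) ▸ (mem_singleton.1 hv) ▸ windowCompatible_of_le le_rfl
    · rw [selectWindow, if_neg h]
      exact ih hts (fun u hu v hv => hlt u hu v (mem_cons_of_mem t hv)) hacc

theorem exists_maximal_windowCompatible_list (H : Finset (ℕ × ℕ))
    (hH : IsChain (· ≤ ·) (H : Set (ℕ × ℕ))) :
    ∃ J : List (ℕ × ℕ), J.Pairwise (· < ·) ∧ (∀ u ∈ J, u ∈ H) ∧
      (∀ u ∈ J, ∀ v ∈ J, WindowCompatible u v) ∧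
      ∀ t ∈ H, t ∉ J → ∃ u ∈ J, ¬ WindowCompatible u t := by
  obtain ⟨l, hl, hmem⟩ := H.exists_pairwise_lt_of_isChain hH
  exact ⟨selectWindow [] l, hl.sublist (selectWindow_sublist l),
    fun u hu => (hmem u).1 ((selectWindow_sublist l).subset hu),
    windowCompatible_of_mem_selectWindow hl (by simp) (by simp),
    fun t ht htJ => exists_not_windowCompatible_of_not_mem ((hmem t).2 ht) htJ⟩

end WindowSelection

end Lists

/-- Block-level data of a match between two strings made of blocks of length `L`: `cells` are
the pairs `(i, j)` of blocks of the two strings containing matched pairs, `c k` counts the matched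
pairs in the block pair `k`, and `x k`, `y k` are the extents of their positions in the two
blocks. -/
structure Staircase (n m : ℕ) (L : ℝ) where
  cells : Finset (ℕ × ℕ)
  c : ℕ × ℕ → ℝ
  x : ℕ × ℕ → ℝ
  y : ℕ × ℕ → ℝ
  fst_lt : ∀ k ∈ cells, k.1 < n
  snd_lt : ∀ k ∈ cells, k.2 < m
  isChain : IsChain (· ≤ ·) (cells : Set (ℕ × ℕ))
  c_nonneg : ∀ k ∈ cells, 0 ≤ c k
  c_le_x : ∀ k ∈ cells, c k ≤ x k
  c_le_y : ∀ k ∈ cells, c k ≤ y k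
  sum_row_le : ∀ p, ∑ k ∈ cells with k.1 = p, x k ≤ L
  sum_col_le : ∀ q, ∑ k ∈ cells with k.2 = q, y k ≤ L

namespace Staircase

open Finset

variable {n m : ℕ} {L : ℝ} (S : Staircase n m L) {α β θ Lr : ℝ}

theorem x_nonneg {k : ℕ × ℕ} (hk : k ∈ S.cells) : 0 ≤ S.x k :=
  (S.c_nonneg k hk).trans (S.c_le_x k hk)

theorem y_nonneg {k : ℕ × ℕ} (hk : k ∈ S.cells) : 0 ≤ S.y k :=
  (S.c_nonneg k hk).trans (S.c_le_y k hk)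

theorem L_nonneg (S : Staircase n m L) : 0 ≤ L :=
  (sum_nonneg fun _ hk => S.x_nonneg (Finset.mem_filter.1 hk).1).trans (S.sum_row_le 0)

theorem le_total_of_mem {k k' : ℕ × ℕ} (hk : k ∈ S.cells) (hk' : k' ∈ S.cells) :
    k ≤ k' ∨ k' ≤ k := by
  rcases eq_or_ne k k' with rfl | hne
  · exact Or.inl le_rfl
  · exact S.isChain hk hk' hne

theorem sum_x_le : ∑ k ∈ S.cells, S.x k ≤ n * L := by
  rw [← sum_fiberwise_of_maps_to (t := range n) fun k hk => mem_range.2 (S.fst_lt k hk)]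
  simpa using sum_le_sum fun p (_ : p ∈ range n) => S.sum_row_le p

theorem sum_y_le : ∑ k ∈ S.cells, S.y k ≤ m * L := by
  rw [← sum_fiberwise_of_maps_to (t := range m) fun k hk => mem_range.2 (S.snd_lt k hk)]
  simpa using sum_le_sum fun q (_ : q ∈ range m) => S.sum_col_le q

theorem card_cells_lt (h : 0 < n + m) : #S.cells < n + m := by
  have hinj : Set.InjOn (fun k : ℕ × ℕ => k.1 + k.2) S.cells := by
    intro k hk k' hk' hsum
    rcases S.le_total_of_mem hk hk' with h | h <;> rw [Prod.le_def] at h <;>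
      exact Prod.ext (by simp only at hsum; omega) (by simp only at hsum; omega)
  have := card_le_card_of_injOn (t := range (n + m - 1)) _ (fun k hk => by
    have := S.fst_lt k hk; have := S.snd_lt k hk; simp only [coe_range, Set.mem_Iio]; omega) hinj
  rw [card_range] at this; omega

def transpose : Staircase m n L where
  cells := S.cells.map (Equiv.prodComm ℕ ℕ).toEmbedding
  c k := S.c k.swap
  x k := S.y k.swap
  y k := S.x k.swap
  fst_lt k hk := S.snd_lt _ (mem_map_equiv.1 hk)
  snd_lt k hk := S.fst_lt _ (mem_map_equiv.1 hk)
  isChain := by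
    rw [coe_map]
    rintro _ ⟨k, hk, rfl⟩ _ ⟨k', hk', rfl⟩ -
    exact (S.le_total_of_mem hk hk').imp Prod.swap_le_swap.2 Prod.swap_le_swap.2
  c_nonneg k hk := S.c_nonneg _ (mem_map_equiv.1 hk)
  c_le_x k hk := S.c_le_y _ (mem_map_equiv.1 hk)
  c_le_y k hk := S.c_le_x _ (mem_map_equiv.1 hk)
  sum_row_le q := by rw [filter_map, sum_map]; convert S.sum_col_le q <;> simp
  sum_col_le p := by rw [filter_map, sum_map]; convert S.sum_row_le p <;> simp

theorem sum_transpose (f : ℕ × ℕ → ℝ) :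
    ∑ k ∈ S.transpose.cells, f k = ∑ k ∈ S.cells, f k.swap := by
  simp [transpose, sum_map]

def IsGapRow (q p : ℕ) : Prop :=
  ∃ lo hi, lo < p ∧ p < hi ∧ (lo, q) ∈ S.cells ∧ (hi, q) ∈ S.cells

section

variable {S}

theorem IsGapRow.snd_eq {q p : ℕ} (h : S.IsGapRow q p) {k : ℕ × ℕ} (hk : k ∈ S.cells)
    (hkp : k.1 = p) : k.2 = q := by
  obtain ⟨lo, hi, hlo, hhi, hlo_mem, hhi_mem⟩ := h
  have h₁ := S.le_total_of_mem hk hlo_mem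
  have h₂ := S.le_total_of_mem hk hhi_mem
  simp only [Prod.le_def] at h₁ h₂
  omega

theorem IsGapRow.eq {q q' p : ℕ} (h : S.IsGapRow q p) (h' : S.IsGapRow q' p) : q = q' := by
  obtain ⟨lo, hi, hlo, hhi, hlo_mem, hhi_mem⟩ := h
  obtain ⟨lo', hi', hlo', hhi', hlo_mem', hhi_mem'⟩ := h'
  have h₁ := S.le_total_of_mem hhi_mem hlo_mem'
  have h₂ := S.le_total_of_mem hlo_mem hhi_mem'
  simp only [Prod.le_def] at h₁ h₂
  omega

theorem IsGapRow.lt {q p : ℕ} (h : S.IsGapRow q p) : p < n := by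
  obtain ⟨lo, hi, -, hhi, -, hhi_mem⟩ := h
  exact hhi.trans (S.fst_lt _ hhi_mem)

theorem sum_gapRows_le {q : ℕ} {T : Finset ℕ} (hT : ∀ p ∈ T, S.IsGapRow q p) :
    ∑ p ∈ T, ∑ k ∈ S.cells with k.1 = p, S.y k ≤ L := by
  rw [← sum_biUnion fun p _ p' _ hpp' => disjoint_filter.2 fun k _ h h' => hpp' (h ▸ h')]
  refine (sum_le_sum_of_subset_of_nonneg ?_ fun k hk _ => S.y_nonneg (mem_filter.1 hk).1).trans
    (S.sum_col_le q)
  intro k hk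
  obtain ⟨p, hp, hkp⟩ := mem_biUnion.1 hk
  obtain ⟨hk_mem, hk_row⟩ := mem_filter.1 hkp
  exact mem_filter.2 ⟨hk_mem, (hT p hp).snd_eq hk_mem hk_row⟩

end

def excess (α : ℝ) (k : ℕ × ℕ) : ℝ := max 0 ((1 - α) * (S.x k + S.y k) - 2 * S.c k)

noncomputable def credit (α : ℝ) (p : ℕ) : ℝ :=
  (1 - α) * (L - ∑ k ∈ S.cells with k.1 = p, S.x k) +
    (∑ k ∈ S.cells with k.1 = p, S.excess α k) / 2

def Balanced (α : ℝ) (k : ℕ × ℕ) : Prop := (1 - α) * (S.x k + S.y k) < 2 * S.c k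

def CellBound (same : ℕ × ℕ → Prop) (α β r : ℝ) : Prop :=
  ∀ k ∈ S.cells, (same k ∧ 2 * S.c k ≤ (1 - β) * (S.x k + S.y k)) ∨
    2 * S.c k ≤ (1 - α) * (S.x k + S.y k) ∨ S.c k ≤ r

theorem excess_nonneg (α : ℝ) (k : ℕ × ℕ) : 0 ≤ S.excess α k := le_max_left _ _

theorem excess_eq_zero_of_balanced {k : ℕ × ℕ} (h : S.Balanced α k) : S.excess α k = 0 :=
  max_eq_left (by unfold Balanced at h; linarith)

theorem transpose_excess (k : ℕ × ℕ) : S.transpose.excess α k = S.excess α k.swap := by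
  simp [excess, transpose, add_comm]

theorem transpose_balanced {k : ℕ × ℕ} : S.transpose.Balanced α k ↔ S.Balanced α k.swap := by
  simp [Balanced, transpose, add_comm]

theorem credit_nonneg (hα : α ≤ 1) (p : ℕ) : 0 ≤ S.credit α p := by
  have := S.sum_row_le p
  have : 0 ≤ ∑ k ∈ S.cells with k.1 = p, S.excess α k := sum_nonneg fun k _ => S.excess_nonneg α k
  unfold credit; nlinarith

theorem le_credit (hα : α ≤ 1 / 7) (p : ℕ) :
    3 / 7 * L - 4 / 7 * ∑ k ∈ S.cells with k.1 = p, S.y k ≤ S.credit α p := by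
  set X := ∑ k ∈ S.cells with k.1 = p, S.x k
  set Y := ∑ k ∈ S.cells with k.1 = p, S.y k
  have hexcess : (1 - α) * X + (1 - α) * Y - 2 * Y ≤ ∑ k ∈ S.cells with k.1 = p, S.excess α k := by
    simp only [X, Y, mul_sum, ← sum_add_distrib, ← sum_sub_distrib]
    refine sum_le_sum fun k hk => le_max_of_le_right ?_
    have := S.c_le_y k (mem_filter.1 hk).1
    linarith
  have hX : X ≤ L := S.sum_row_le p
  have hY : 0 ≤ Y := sum_nonneg fun k hk => S.y_nonneg (mem_filter.1 hk).1
  have hL := S.L_nonneg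
  unfold credit
  nlinarith [mul_nonneg (sub_nonneg.2 hα) hY, mul_nonneg (sub_nonneg.2 hα) hL,
    mul_nonneg (by linarith : 0 ≤ 1 - α) (sub_nonneg.2 hX)]

theorem sum_credit :
    ∑ p ∈ range n, S.credit α p =
      (1 - α) * (n * L - ∑ k ∈ S.cells, S.x k) + (∑ k ∈ S.cells, S.excess α k) / 2 := by
  have hrow (f : ℕ × ℕ → ℝ) : ∑ p ∈ range n, ∑ k ∈ S.cells with k.1 = p, f k = ∑ k ∈ S.cells, f k :=
    sum_fiberwise_of_maps_to (fun k hk => mem_range.2 (S.fst_lt k hk)) f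
  simp only [credit, sum_add_distrib, ← mul_sum, ← sum_div, sum_sub_distrib, hrow]
  simp

theorem x_le_of_balanced (hα₀ : 0 ≤ α) (hα : α ≤ 1 / 7) {k : ℕ × ℕ} (hk : k ∈ S.cells)
    (hb : S.Balanced α k) : S.x k ≤ 4 / 3 * S.y k := by
  have := S.c_le_y k hk
  have := S.x_nonneg hk
  unfold Balanced at hb
  nlinarith


theorem sum_x_row_le {H : Finset (ℕ × ℕ)} (hH : H ⊆ S.cells) (p : ℕ) :
    ∑ k ∈ H with k.1 = p, S.x k ≤ L :=
  (sum_le_sum_of_subset_of_nonneg (filter_subset_filter _ hH)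
    fun _ hk _ => S.x_nonneg (mem_filter.1 hk).1).trans (S.sum_row_le p)

theorem sum_x_row_le_of_balanced (hα₀ : 0 ≤ α) (hα : α ≤ 1 / 7) {H : Finset (ℕ × ℕ)}
    (hH : ∀ k ∈ H, k ∈ S.cells ∧ S.Balanced α k) (p : ℕ) :
    ∑ k ∈ H with k.1 = p, S.x k ≤ 4 / 3 * ∑ k ∈ S.cells with k.1 = p, S.y k := by
  rw [mul_sum]
  refine (sum_le_sum fun k hk => ?_).trans (sum_le_sum_of_subset_of_nonneg
    (filter_subset_filter _ fun k hk => (hH k hk).1) fun k hk _ => ?_)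
  · obtain ⟨hkc, hkb⟩ := hH k (mem_filter.1 hk).1
    exact S.x_le_of_balanced hα₀ hα hkc hkb
  · have := S.y_nonneg (mem_filter.1 hk).1; positivity

theorem mul_sum_x_le_credit_add_credit (hα₀ : 0 ≤ α) (hα : α ≤ 1 / 7) (hθ₀ : 0 ≤ θ)
    (hθ : θ ≤ 1 / 7) {H : Finset (ℕ × ℕ)} (hH : ∀ k ∈ H, k ∈ S.cells ∧ S.Balanced α k)
    {U : Finset ℕ} {pk r₁ r₂ : ℕ} (hpk : pk ∈ U)
    (hW : ∑ k ∈ S.cells with k.1 = r₁, S.y k + ∑ k ∈ S.cells with k.1 = r₂, S.y k +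
      ∑ p ∈ U.erase pk, ∑ k ∈ S.cells with k.1 = p, S.y k ≤ L) :
    θ * ∑ p ∈ U, ∑ k ∈ H with k.1 = p, S.x k ≤ S.credit α r₁ + S.credit α r₂ := by
  set W : ℕ → ℝ := fun p => ∑ k ∈ S.cells with k.1 = p, S.y k
  have hpk_le := S.sum_x_row_le (fun k hk => (hH k hk).1) pk
  have hrest : ∑ p ∈ U.erase pk, ∑ k ∈ H with k.1 = p, S.x k ≤ 4 / 3 * ∑ p ∈ U.erase pk, W p := by
    rw [mul_sum]; exact sum_le_sum fun p _ => S.sum_x_row_le_of_balanced hα₀ hα hH p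
  have hs : 0 ≤ ∑ p ∈ U.erase pk, W p :=
    sum_nonneg fun p _ => sum_nonneg fun k hk => S.y_nonneg (mem_filter.1 hk).1
  have h₁ := S.le_credit hα r₁
  have h₂ := S.le_credit hα r₂
  have hL := S.L_nonneg
  rw [← add_sum_erase U _ hpk, mul_add]
  -- The two credits are at least `6L/7 - 4/7 (W r₁ + W r₂) ≥ 2L/7 + 4/7 ∑ W`, while the gains
  -- are at most `θ (L + 4/3 ∑ W) ≤ L/7 + 4/21 ∑ W`.
  nlinarith

theorem exists_gapRows_mul_sum_le (hα₀ : 0 ≤ α) (hα : α ≤ 1 / 7) (hθ₀ : 0 ≤ θ) (hθ : θ ≤ 1 / 7)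
    {H : Finset (ℕ × ℕ)} (hH : ∀ k ∈ H, k ∈ S.cells ∧ S.Balanced α k) (q : ℕ) {U : Finset ℕ}
    (hU : ∀ p ∈ U, (p, q) ∈ S.cells ∧ ∃ p₀, (p₀, q) ∈ S.cells ∧ p₀ + 2 < p) :
    ∃ P : Finset ℕ, (∀ p ∈ P, S.IsGapRow q p) ∧
      θ * ∑ p ∈ U, ∑ k ∈ H with k.1 = p, S.x k ≤ ∑ p ∈ P, S.credit α p := by
  rcases U.eq_empty_or_nonempty with rfl | hne
  · exact ⟨∅, by simp, by simp⟩
  obtain ⟨p₀, hp₀, hp₀_lt⟩ := (hU _ (U.min'_mem hne)).2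
  set pk := U.max' hne
  have hlo : ∀ p ∈ U, p₀ + 2 < p := fun p hp => hp₀_lt.trans_le (U.min'_le p hp)
  have hgap : ∀ p, p₀ < p → p < pk → S.IsGapRow q p := fun p h₁ h₂ =>
    ⟨p₀, pk, h₁, h₂, hp₀, (hU pk (U.max'_mem hne)).1⟩
  have hpk_lt : p₀ + 2 < pk := hlo pk (U.max'_mem hne)
  have h₁ : p₀ + 1 ∉ insert (p₀ + 2) (U.erase pk) := by
    simp only [mem_insert, mem_erase, not_or]
    exact ⟨by omega, fun h => by have := hlo _ h.2; omega⟩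
  have h₂ : p₀ + 2 ∉ U.erase pk := fun h => by have := hlo _ (mem_of_mem_erase h); omega
  have hW := S.sum_gapRows_le (q := q) (T := insert (p₀ + 1) (insert (p₀ + 2) (U.erase pk))) <| by
    simp only [mem_insert, mem_erase]
    rintro p (rfl | rfl | ⟨hp, hpU⟩)
    · exact hgap _ (by omega) (by omega)
    · exact hgap _ (by omega) (by omega)
    · exact hgap _ (by have := hlo p hpU; omega) (lt_of_le_of_ne (U.le_max' p hpU) hp)
  rw [sum_insert h₁, sum_insert h₂, ← add_assoc] at hW
  refine ⟨{p₀ + 1, p₀ + 2}, ?_, ?_⟩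
  · simp only [mem_insert, mem_singleton]
    rintro p (rfl | rfl) <;> exact hgap _ (by omega) (by omega)
  · rw [sum_pair (by omega)]
    exact S.mul_sum_x_le_credit_add_credit hα₀ hα hθ₀ hθ hH (U.max'_mem hne) hW

theorem mul_sum_x_le_sum_credit (hα₀ : 0 ≤ α) (hα : α ≤ 1 / 7) (hθ₀ : 0 ≤ θ) (hθ : θ ≤ 1 / 7)
    {H : Finset (ℕ × ℕ)} (hH : ∀ k ∈ H, k ∈ S.cells ∧ S.Balanced α k) {U : Finset ℕ}
    (hU : ∀ p ∈ U, ∃ q, (p, q) ∈ S.cells ∧ ∃ p₀, (p₀, q) ∈ S.cells ∧ p₀ + 2 < p) :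
    θ * ∑ p ∈ U, ∑ k ∈ H with k.1 = p, S.x k ≤ ∑ p ∈ range n, S.credit α p := by
  classical
  choose! col hcol using hU
  have hP : ∀ q, ∃ P : Finset ℕ, (∀ p ∈ P, S.IsGapRow q p) ∧
      θ * ∑ p ∈ U with col p = q, ∑ k ∈ H with k.1 = p, S.x k ≤ ∑ p ∈ P, S.credit α p :=
    fun q => S.exists_gapRows_mul_sum_le hα₀ hα hθ₀ hθ hH q fun p hp => by
      obtain ⟨hpU, rfl⟩ := mem_filter.1 hp
      exact hcol p hpU
  choose P hP using hP
  have hdisj : (range m : Set ℕ).PairwiseDisjoint P := fun q _ q' _ hqq' =>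
    disjoint_left.2 fun p hp hp' => hqq' ((hP q).1 p hp |>.eq ((hP q').1 p hp'))
  rw [← sum_fiberwise_of_maps_to (t := range m) fun p hp => mem_range.2 (S.snd_lt _ (hcol p hp).1),
    mul_sum]
  refine (sum_le_sum fun q _ => (hP q).2).trans ?_
  rw [← sum_biUnion hdisj]
  refine sum_le_sum_of_subset_of_nonneg (fun p hp => ?_) fun p _ _ =>
    S.credit_nonneg (by linarith) p
  obtain ⟨q, -, hp⟩ := mem_biUnion.1 hp
  exact mem_range.2 ((hP q).1 p hp).lt

theorem mul_sum_x_le (hα₀ : 0 ≤ α) (hα : α ≤ 1 / 7) (hθ₀ : 0 ≤ θ) (hθ : θ ≤ 1 / 7)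
    {H K : Finset (ℕ × ℕ)} (hH : ∀ k ∈ H, k ∈ S.cells ∧ S.Balanced α k) (hK : K ⊆ H)
    (hblock : ∀ t ∈ H, t ∉ K → ∃ u ∈ K, ¬ WindowCompatible u t) :
    θ * ∑ k ∈ H, S.x k ≤ θ * L * #K +
      ((1 - α) * (n * L - ∑ k ∈ S.cells, S.x k) + (∑ k ∈ S.cells, S.excess α k) / 2) := by
  classical
  set g : ℕ → ℝ := fun p => ∑ k ∈ H with k.1 = p, S.x k
  set covered : Finset ℕ := (range n).filter fun p => ∃ u ∈ K, u.1 = p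
  set U : Finset ℕ :=
    ((range n).filter fun p => ¬ ∃ u ∈ K, u.1 = p).filter fun p => ∃ k ∈ H, k.1 = p
  have hsplit : ∑ k ∈ H, S.x k = ∑ p ∈ covered, g p + ∑ p ∈ U, g p := by
    rw [← sum_fiberwise_of_maps_to (t := range n) fun k hk => mem_range.2 (S.fst_lt k (hH k hk).1),
      ← sum_filter_add_sum_filter_not (range n) (fun p => ∃ u ∈ K, u.1 = p)]
    congr 1
    refine (sum_filter_of_ne fun p _ hp => ?_).symm
    obtain ⟨k, hk, -⟩ := exists_ne_zero_of_sum_ne_zero hp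
    exact ⟨k, (mem_filter.1 hk).1, (mem_filter.1 hk).2⟩
  have hcovered : ∑ p ∈ covered, g p ≤ L * #K := by
    have hcard : #covered ≤ #K := le_trans (card_le_card fun p hp => by
      obtain ⟨u, hu, rfl⟩ := (mem_filter.1 hp).2
      exact mem_image_of_mem Prod.fst hu) card_image_le
    calc ∑ p ∈ covered, g p ≤ #covered * L := by
          simpa using sum_le_card_nsmul _ _ _ fun p _ => S.sum_x_row_le (fun k hk => (hH k hk).1) p
      _ ≤ L * #K := by
          rw [mul_comm]; exact mul_le_mul_of_nonneg_left (by exact_mod_cast hcard) S.L_nonneg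
  have hU : ∀ p ∈ U, ∃ q, (p, q) ∈ S.cells ∧ ∃ p₀, (p₀, q) ∈ S.cells ∧ p₀ + 2 < p := by
    intro p hp
    obtain ⟨hp', t, htH, rfl⟩ := mem_filter.1 hp
    have hunc := (mem_filter.1 hp').2
    obtain ⟨u, huK, hut⟩ := hblock t htH fun htK => hunc ⟨t, htK, rfl⟩
    rcases not_windowCompatible_iff.1 hut with ⟨h, -⟩ | ⟨h, h'⟩
    · exact absurd ⟨u, huK, h⟩ hunc
    · exact ⟨t.2, (hH t htH).1, u.1, by simpa [← h] using (hH u (hK huK)).1, h'⟩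
  have hgU := S.mul_sum_x_le_sum_credit hα₀ hα hθ₀ hθ hH hU
  rw [hsplit, mul_add, ← S.sum_credit]
  nlinarith

theorem mul_sum_y_le (hα₀ : 0 ≤ α) (hα : α ≤ 1 / 7) (hθ₀ : 0 ≤ θ) (hθ : θ ≤ 1 / 7)
    {H K : Finset (ℕ × ℕ)} (hH : ∀ k ∈ H, k ∈ S.cells ∧ S.Balanced α k) (hK : K ⊆ H)
    (hblock : ∀ t ∈ H, t ∉ K → ∃ u ∈ K, ¬ WindowCompatible u t) :
    θ * ∑ k ∈ H, S.y k ≤ θ * L * #K +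
      ((1 - α) * (m * L - ∑ k ∈ S.cells, S.y k) + (∑ k ∈ S.cells, S.excess α k) / 2) := by
  set e := (Equiv.prodComm ℕ ℕ).toEmbedding
  have h := S.transpose.mul_sum_x_le hα₀ hα hθ₀ hθ (H := H.map e) (K := K.map e)
    (fun k hk => by
      have := hH _ (mem_map_equiv.1 hk)
      exact ⟨mem_map_equiv.2 this.1, S.transpose_balanced.2 this.2⟩)
    (map_subset_map.2 hK)
    (fun t ht htK => by
      obtain ⟨u, hu, hut⟩ := hblock _ (mem_map_equiv.1 ht) fun h => htK (mem_map_equiv.2 h)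
      refine ⟨u.swap, mem_map_equiv.2 (by simpa using hu), ?_⟩
      rwa [← windowCompatible_swap, Prod.swap_swap])
  rw [sum_transpose, sum_transpose, card_map, sum_map] at h
  simp only [transpose_excess] at h
  simpa only [transpose, e, Equiv.coe_toEmbedding, Equiv.prodComm_apply,
    Prod.swap_swap] using h

theorem two_mul_c_add_excess_le (hα : α ≤ 1) (hLr : 0 ≤ Lr) {same : Prop} {k : ℕ × ℕ}
    (hk : k ∈ S.cells)
    (hcell : (same ∧ 2 * S.c k ≤ (1 - β) * (S.x k + S.y k)) ∨
      2 * S.c k ≤ (1 - α) * (S.x k + S.y k) ∨ S.c k ≤ Lr)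
    (hk' : ¬ (same ∧ S.Balanced α k ∧ 2 * S.c k ≤ (1 - β) * (S.x k + S.y k))) :
    2 * S.c k + S.excess α k ≤ (1 - α) * (S.x k + S.y k) + 2 * Lr := by
  have hxy : 0 ≤ S.x k + S.y k := add_nonneg (S.x_nonneg hk) (S.y_nonneg hk)
  by_cases hb : S.Balanced α k
  · rw [S.excess_eq_zero_of_balanced hb]
    unfold Balanced at hb
    rcases hcell with hcell | hcell | hcell
    · exact absurd ⟨hcell.1, hb, hcell.2⟩ hk'
    · linarith
    · nlinarith
  · rw [excess, max_eq_right (by unfold Balanced at hb; linarith)]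
    linarith

theorem sum_two_mul_c_add_excess_le (hα : α ≤ 1) (hLr : 0 ≤ Lr) {same : ℕ × ℕ → Prop}
    (hcell : S.CellBound same α β Lr) {H : Finset (ℕ × ℕ)}
    (hH : ∀ k, k ∈ H ↔ k ∈ S.cells ∧ same k ∧ S.Balanced α k ∧
      2 * S.c k ≤ (1 - β) * (S.x k + S.y k)) :
    ∑ k ∈ S.cells, (2 * S.c k + S.excess α k) ≤
      ∑ k ∈ S.cells, ((1 - α) * (S.x k + S.y k) + 2 * Lr) + ∑ k ∈ H, (α - β) * (S.x k + S.y k) := by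
  have hHc : H ⊆ S.cells := fun k hk => ((hH k).1 hk).1
  have h₁ : ∑ k ∈ H, (2 * S.c k + S.excess α k) ≤
      ∑ k ∈ H, ((1 - α) * (S.x k + S.y k) + 2 * Lr) + ∑ k ∈ H, (α - β) * (S.x k + S.y k) := by
    rw [← sum_add_distrib]
    refine sum_le_sum fun k hk => ?_
    obtain ⟨-, -, hb, hc⟩ := (hH k).1 hk
    rw [S.excess_eq_zero_of_balanced hb]
    linarith
  have h₂ : ∑ k ∈ S.cells \ H, (2 * S.c k + S.excess α k) ≤
      ∑ k ∈ S.cells \ H, ((1 - α) * (S.x k + S.y k) + 2 * Lr) :=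
    sum_le_sum fun k hk => S.two_mul_c_add_excess_le hα hLr (mem_sdiff.1 hk).1
      (hcell k (mem_sdiff.1 hk).1) fun h => (mem_sdiff.1 hk).2 ((hH k).2 ⟨(mem_sdiff.1 hk).1, h⟩)
  rw [← sum_sdiff hHc, ← sum_sdiff hHc (f := fun k => (1 - α) * (S.x k + S.y k) + 2 * Lr)]
  linarith

theorem exists_window_chain (hβ : 0 ≤ β) (hβα : β ≤ α) (hα : α ≤ 1 / 7) (hLr : 0 ≤ Lr)
    {same : ℕ × ℕ → Prop} (hcell : S.CellBound same α β Lr) :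
    ∃ J : List (ℕ × ℕ), J.Pairwise (· < ·) ∧ (∀ u ∈ J, u ∈ S.cells ∧ same u) ∧
      (∀ u ∈ J, ∀ v ∈ J, WindowCompatible u v) ∧
      2 * ∑ k ∈ S.cells, S.c k ≤
        (1 - α) * ((n + m) * L) + 2 * (α - β) * L * J.length + 2 * Lr * #S.cells := by
  classical
  set H := S.cells.filter fun k => same k ∧ S.Balanced α k ∧ 2 * S.c k ≤ (1 - β) * (S.x k + S.y k)
  have hHmem : ∀ k, k ∈ H ↔ k ∈ S.cells ∧ same k ∧ S.Balanced α k ∧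
      2 * S.c k ≤ (1 - β) * (S.x k + S.y k) := fun k => mem_filter
  have hH : ∀ k ∈ H, k ∈ S.cells ∧ S.Balanced α k := fun k hk =>
    ⟨((hHmem k).1 hk).1, ((hHmem k).1 hk).2.2.1⟩
  obtain ⟨J, hJ, hJH, hJwin, hblock⟩ :=
    exists_maximal_windowCompatible_list H (S.isChain.mono fun k hk => (hH k hk).1)
  set K := J.toFinset
  have hKH : K ⊆ H := fun u hu => hJH u (List.mem_toFinset.1 hu)
  have hKblock : ∀ t ∈ H, t ∉ K → ∃ u ∈ K, ¬ WindowCompatible u t := fun t ht htK => by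
    obtain ⟨u, hu, hut⟩ := hblock t ht fun h => htK (List.mem_toFinset.2 h)
    exact ⟨u, List.mem_toFinset.2 hu, hut⟩
  have hα₀ : 0 ≤ α := hβ.trans hβα
  have hθ₀ : 0 ≤ α - β := sub_nonneg.2 hβα
  have hθ : α - β ≤ 1 / 7 := by linarith
  have hrow := S.mul_sum_x_le hα₀ hα hθ₀ hθ hH hKH hKblock
  have hcol := S.mul_sum_y_le hα₀ hα hθ₀ hθ hH hKH hKblock
  have hK : (#K : ℝ) = J.length := by rw [List.toFinset_card_of_nodup (hJ.imp ne_of_lt)]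
  have hsum := S.sum_two_mul_c_add_excess_le (by linarith) hLr hcell hHmem
  simp only [sum_add_distrib, mul_add, ← mul_sum, sum_const, nsmul_eq_mul] at hsum
  have hexcess := sum_nonneg fun k (_ : k ∈ S.cells) => S.excess_nonneg α k
  refine ⟨J, hJ, fun u hu => ?_, hJwin, by rw [← hK]; linarith⟩
  obtain ⟨h₁, h₂, -⟩ := (hHmem u).1 (hJH u hu)
  exact ⟨h₁, h₂⟩

theorem two_mul_sum_c_le (hβα : β ≤ α) (hβ : β ≤ 1) (hLr : 0 ≤ Lr) {same : ℕ × ℕ → Prop}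
    (hcell : S.CellBound same α β Lr) :
    2 * ∑ k ∈ S.cells, S.c k ≤ (1 - β) * ((n + m) * L) + 2 * Lr * #S.cells := by
  have hpt : ∀ k ∈ S.cells, 2 * S.c k ≤ (1 - β) * (S.x k + S.y k) + 2 * Lr := fun k hk => by
    have hxy : 0 ≤ S.x k + S.y k := add_nonneg (S.x_nonneg hk) (S.y_nonneg hk)
    rcases hcell k hk with h | h | h
    · linarith [h.2]
    · nlinarith
    · nlinarith
  have := sum_le_sum hpt
  simp only [sum_add_distrib, ← mul_sum, sum_const, nsmul_eq_mul] at this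
  have := S.sum_x_le
  have := S.sum_y_le
  nlinarith

end Staircase

section Blocks

open List

variable {σ Λ : Type*} {L : ℕ}

theorem List.drop_mul_flatten_map {f : σ → List Λ} (hf : ∀ s, (f s).length = L) :
    ∀ (l : List σ) (p : ℕ), ((l.map f).flatten).drop (p * L) = ((l.drop p).map f).flatten
  | _, 0 => by simp
  | [], _ + 1 => by simp
  | s :: l, p + 1 => by
    rw [map_cons, flatten_cons, add_mul, one_mul, add_comm, ← drop_drop,
      drop_left' (hf s), drop_mul_flatten_map hf l p, drop_succ_cons]

theorem List.take_drop_flatten_map_infix {f : σ → List Λ} (hf : ∀ s, (f s).length = L)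
    {l : List σ} {p : ℕ} (hp : p < l.length) {i w : ℕ} (hi : p * L ≤ i) (hiw : i + w ≤ p * L + L) :
    (((l.map f).flatten).drop i).take w <:+: f l[p] := by
  obtain ⟨r, rfl⟩ : ∃ r, i = p * L + r := ⟨i - p * L, by omega⟩
  rw [← drop_drop, drop_mul_flatten_map hf, drop_eq_getElem_cons hp, map_cons, flatten_cons,
    drop_append_of_le_length (by rw [hf]; omega),
    take_append_of_le_length (by simp only [length_drop, hf]; omega)]
  exact (take_prefix _ _).isInfix.trans (drop_suffix _ _).isInfix

theorem List.length_flatten_map_of_length_eq {f : σ → List Λ} (hf : ∀ s, (f s).length = L)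
    (l : List σ) :
    ((l.map f).flatten).length = l.length * L := by
  induction l with
  | nil => simp
  | cons s l ih => simp only [map_cons, flatten_cons, length_append, hf, ih, length_cons]; ring

theorem List.length_take_drop_flatten_map {f : σ → List Λ} (hf : ∀ s, (f s).length = L)
    {l : List σ} {p : ℕ} (hp : p < l.length) {i w : ℕ} (hiw : i + w ≤ p * L + L) :
    ((((l.map f).flatten).drop i).take w).length = w := by
  have : (p + 1) * L ≤ l.length * L := Nat.mul_le_mul_right L hp
  rw [Nat.succ_mul] at this
  simp only [length_take, length_drop, length_flatten_map_of_length_eq hf]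
  omega

theorem Paper.IsMatch.window {a b : List σ} {S : List (ℕ × ℕ)} (h : IsMatch a b S) {i j w w' : ℕ}
    (hw : ∀ u ∈ S, i ≤ u.1 ∧ u.1 < i + w ∧ j ≤ u.2 ∧ u.2 < j + w') :
    IsMatch ((a.drop i).take w) ((b.drop j).take w') (S.map fun u => (u.1 - i, u.2 - j)) := by
  refine ⟨Pairwise.isChain (pairwise_map.2 (h.pairwise.imp_of_mem fun hu _ huv => ?_)),
    fun u hu => ?_⟩
  · have := hw _ hu; omega
  · obtain ⟨v, hv, rfl⟩ := mem_map.1 hu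
    obtain ⟨h₁, h₂, h₃⟩ := h.2 v hv
    have := hw v hv
    simp only [length_take, length_drop, getElem?_take_of_lt (show v.1 - i < w by omega),
      getElem?_take_of_lt (show v.2 - j < w' by omega), getElem?_drop]
    refine ⟨by omega, by omega, ?_⟩
    rwa [Nat.add_sub_cancel' this.1, Nat.add_sub_cancel' this.2.2.1]

def blockOf (L : ℕ) (u : ℕ × ℕ) : ℕ × ℕ := (u.1 / L, u.2 / L)

def blockPairs (L : ℕ) (I : List (ℕ × ℕ)) (k : ℕ × ℕ) : List (ℕ × ℕ) :=
  I.filter fun u => blockOf L u = k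

variable {I : List (ℕ × ℕ)}

theorem mem_blockPairs {u k : ℕ × ℕ} : u ∈ blockPairs L I k ↔ u ∈ I ∧ blockOf L u = k := by
  simp [blockPairs]

theorem blockPairs_ne_nil {k : ℕ × ℕ} (hk : k ∈ (I.map (blockOf L)).toFinset) :
    blockPairs L I k ≠ [] := by
  obtain ⟨u, hu, rfl⟩ := mem_map.1 (mem_toFinset.1 hk)
  exact ne_nil_of_mem (mem_blockPairs.2 ⟨hu, rfl⟩)

theorem sum_length_blockPairs :
    ∑ k ∈ (I.map (blockOf L)).toFinset, (blockPairs L I k).length = I.length := by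
  rw [← length_map (f := blockOf L), ← sum_toFinset_count_eq_length]
  refine Finset.sum_congr rfl fun k _ => ?_
  simp only [blockPairs, count_eq_countP, countP_eq_length_filter, filter_map, length_map]
  rfl

theorem mem_Ico_of_div_eq (hL : 0 < L) {v p : ℕ} (h : v / L = p) : p * L ≤ v ∧ v < p * L + L := by
  subst h
  exact ⟨Nat.div_mul_le_self v L, Nat.lt_div_mul_add hL⟩

theorem blockOf_mono {u v : ℕ × ℕ} (h : u ≤ v) : blockOf L u ≤ blockOf L v :=
  Prod.mk_le_mk.2 ⟨Nat.div_le_div_right h.1, Nat.div_le_div_right h.2⟩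

theorem Paper.IsMatch.lt_or_lt {a b : List σ} (hI : IsMatch a b I) {u v : ℕ × ℕ} (hu : u ∈ I)
    (hv : v ∈ I) (hne : u ≠ v) : (u.1 < v.1 ∧ u.2 < v.2) ∨ (v.1 < u.1 ∧ v.2 < u.2) := by
  have : Std.Symm fun u v : ℕ × ℕ => (u.1 < v.1 ∧ u.2 < v.2) ∨ (v.1 < u.1 ∧ v.2 < u.2) :=
    ⟨fun _ _ => Or.symm⟩
  have hI' : I.Pairwise fun u v : ℕ × ℕ => (u.1 < v.1 ∧ u.2 < v.2) ∨ (v.1 < u.1 ∧ v.2 < u.2) :=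
    hI.pairwise.imp Or.inl
  exact hI'.forall hu hv hne

theorem Paper.IsMatch.lt_of_mem_blockPairs {a b : List σ} (hI : IsMatch a b I) {k k' u v : ℕ × ℕ}
    (h : k < k') (hu : u ∈ blockPairs L I k) (hv : v ∈ blockPairs L I k') :
    u.1 < v.1 ∧ u.2 < v.2 := by
  obtain ⟨huI, rfl⟩ := mem_blockPairs.1 hu
  obtain ⟨hvI, rfl⟩ := mem_blockPairs.1 hv
  rcases eq_or_ne u v with rfl | hne
  · exact absurd h (lt_irrefl _)
  rcases hI.lt_or_lt huI hvI hne with huv | hvu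
  · exact huv
  · exact absurd (blockOf_mono (L := L) (Prod.le_def.2 ⟨hvu.1.le, hvu.2.le⟩)) h.not_ge

end Blocks

namespace Paper.IsMatch

open List

variable {σ Λ : Type*} {L n m : ℕ} {a b : List σ} {I : List (ℕ × ℕ)}

theorem pairwise_map_fst_blockPairs (hI : IsMatch a b I) (k : ℕ × ℕ) :
    ((blockPairs L I k).map Prod.fst).Pairwise (· < ·) :=
  (hI.pairwise.sublist filter_sublist).map _ fun _ _ h => h.1

theorem pairwise_map_snd_blockPairs (hI : IsMatch a b I) (k : ℕ × ℕ) :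
    ((blockPairs L I k).map Prod.snd).Pairwise (· < ·) :=
  (hI.pairwise.sublist filter_sublist).map _ fun _ _ h => h.2

theorem sum_extent_row_le (hI : IsMatch a b I) (hL : 0 < L) (p : ℕ) :
    ∑ k ∈ (I.map (blockOf L)).toFinset with k.1 = p,
      extent ((blockPairs L I k).map Prod.fst) ≤ L := by
  refine sum_extent_le _ _ (lo := p * L)
    (fun k hk => by simpa using blockPairs_ne_nil (Finset.mem_filter.1 hk).1) ?_ ?_
  · intro k hk v hv
    obtain ⟨u, hu, rfl⟩ := mem_map.1 hv
    have := (mem_blockPairs.1 hu).2 ▸ (Finset.mem_filter.1 hk).2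
    exact mem_Ico_of_div_eq hL this
  · intro k hk k' hk' hne
    have hrow : k.1 = k'.1 := (Finset.mem_filter.1 hk).2.trans (Finset.mem_filter.1 hk').2.symm
    have hsep : ∀ {k k'}, k.1 = k'.1 → k.2 < k'.2 → ∀ u ∈ (blockPairs L I k).map Prod.fst,
        ∀ v ∈ (blockPairs L I k').map Prod.fst, u < v := by
      intro k k' h₁ h₂ _ hx _ hy
      obtain ⟨u, hu, rfl⟩ := mem_map.1 hx
      obtain ⟨v, hv, rfl⟩ := mem_map.1 hy
      exact (hI.lt_of_mem_blockPairs (Prod.lt_iff.2 (Or.inr ⟨h₁.le, h₂⟩)) hu hv).1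
    rcases lt_or_gt_of_ne fun h => hne (Prod.ext hrow h) with h | h
    · exact Or.inl (hsep hrow h)
    · exact Or.inr (hsep hrow.symm h)

theorem sum_extent_col_le (hI : IsMatch a b I) (hL : 0 < L) (q : ℕ) :
    ∑ k ∈ (I.map (blockOf L)).toFinset with k.2 = q,
      extent ((blockPairs L I k).map Prod.snd) ≤ L := by
  refine sum_extent_le _ _ (lo := q * L)
    (fun k hk => by simpa using blockPairs_ne_nil (Finset.mem_filter.1 hk).1) ?_ ?_
  · intro k hk v hv
    obtain ⟨u, hu, rfl⟩ := mem_map.1 hv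
    have := (mem_blockPairs.1 hu).2 ▸ (Finset.mem_filter.1 hk).2
    exact mem_Ico_of_div_eq hL this
  · intro k hk k' hk' hne
    have hcol : k.2 = k'.2 := (Finset.mem_filter.1 hk).2.trans (Finset.mem_filter.1 hk').2.symm
    have hsep : ∀ {k k'}, k.2 = k'.2 → k.1 < k'.1 → ∀ u ∈ (blockPairs L I k).map Prod.snd,
        ∀ v ∈ (blockPairs L I k').map Prod.snd, u < v := by
      intro k k' h₁ h₂ _ hx _ hy
      obtain ⟨u, hu, rfl⟩ := mem_map.1 hx
      obtain ⟨v, hv, rfl⟩ := mem_map.1 hy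
      exact (hI.lt_of_mem_blockPairs (Prod.lt_iff.2 (Or.inl ⟨h₂, h₁.le⟩)) hu hv).2
    rcases lt_or_gt_of_ne fun h => hne (Prod.ext h hcol) with h | h
    · exact Or.inl (hsep hcol h)
    · exact Or.inr (hsep hcol.symm h)

noncomputable def staircase (hI : IsMatch a b I) (hL : 0 < L) (ha : a.length = n * L)
    (hb : b.length = m * L) : Staircase n m L where
  cells := (I.map (blockOf L)).toFinset
  c k := (blockPairs L I k).length
  x k := extent ((blockPairs L I k).map Prod.fst)
  y k := extent ((blockPairs L I k).map Prod.snd)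
  fst_lt k hk := by
    obtain ⟨u, hu, rfl⟩ := mem_map.1 (mem_toFinset.1 hk)
    exact (Nat.div_lt_iff_lt_mul hL).2 (ha ▸ (hI.2 u hu).1)
  snd_lt k hk := by
    obtain ⟨u, hu, rfl⟩ := mem_map.1 (mem_toFinset.1 hk)
    exact (Nat.div_lt_iff_lt_mul hL).2 (hb ▸ (hI.2 u hu).2.1)
  isChain := by
    rintro _ hk _ hk' -
    obtain ⟨u, hu, rfl⟩ := mem_map.1 (mem_toFinset.1 hk)
    obtain ⟨v, hv, rfl⟩ := mem_map.1 (mem_toFinset.1 hk')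
    rcases eq_or_ne u v with rfl | hne
    · exact Or.inl le_rfl
    rcases hI.lt_or_lt hu hv hne with h | h
    · exact Or.inl (blockOf_mono (Prod.le_def.2 ⟨h.1.le, h.2.le⟩))
    · exact Or.inr (blockOf_mono (Prod.le_def.2 ⟨h.1.le, h.2.le⟩))
  c_nonneg _ _ := Nat.cast_nonneg _
  c_le_x k _ := by
    exact_mod_cast
      (length_map (f := Prod.fst) ▸ length_le_extent (hI.pairwise_map_fst_blockPairs k))
  c_le_y k _ := by
    exact_mod_cast
      (length_map (f := Prod.snd) ▸ length_le_extent (hI.pairwise_map_snd_blockPairs k))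
  sum_row_le p := by exact_mod_cast hI.sum_extent_row_le hL p
  sum_col_le q := by exact_mod_cast hI.sum_extent_col_le hL q

theorem sum_c_staircase (hI : IsMatch a b I) (hL : 0 < L) (ha : a.length = n * L)
    (hb : b.length = m * L) :
    ∑ k ∈ (hI.staircase hL ha hb).cells, (hI.staircase hL ha hb).c k = I.length := by
  rw [← sum_length_blockPairs (L := L)]; push_cast; rfl

end Paper.IsMatch

theorem Nat.exists_window_of_le_add_two {P : ℕ → Prop} (h : ∀ i j, P i → P j → j ≤ i + 2) :
    ∃ s, ∀ j, P j → j ∈ ({s, s + 1, s + 2} : Set ℕ) := by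
  classical
  by_cases hP : ∃ i, P i
  · refine ⟨Nat.find hP, fun j hj => ?_⟩
    have := Nat.find_min' hP hj
    have := h _ _ (Nat.find_spec hP) hj
    simp only [Set.mem_insert_iff, Set.mem_singleton_iff]
    omega
  · exact ⟨0, fun j hj => absurd ⟨j, hj⟩ hP⟩

namespace Paper

open List

variable {σ Λ : Type*}

theorem isApproxMatch_of_windowCompatible {a b : List σ} {J : List (ℕ × ℕ)}
    (hJ : J.Pairwise (· < ·)) (hmem : ∀ u ∈ J, u.1 < a.length ∧ u.2 < b.length ∧ a[u.1]? = b[u.2]?)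
    (hwin : ∀ u ∈ J, ∀ v ∈ J, WindowCompatible u v) : IsApproxMatch a b J := by
  refine ⟨hJ.isChain.imp fun _ _ h => ⟨h.le.1, h.le.2, h.ne⟩, hmem, fun u _ => ⟨?_, ?_⟩⟩
  · obtain ⟨s, hs⟩ := Nat.exists_window_of_le_add_two
      (P := fun j => ∃ v ∈ J, v.1 = u.1 ∧ v.2 = j) <| by
      rintro _ _ ⟨v, hv, hv₁, rfl⟩ ⟨w, hw, hw₁, rfl⟩
      exact (hwin v hv w hw).1 (hv₁.trans hw₁.symm)
    exact ⟨s, fun v hv hv₁ => hs _ ⟨v, hv, hv₁, rfl⟩⟩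
  · obtain ⟨t, ht⟩ := Nat.exists_window_of_le_add_two
      (P := fun j => ∃ v ∈ J, v.2 = u.2 ∧ v.1 = j) <| by
      rintro _ _ ⟨v, hv, hv₂, rfl⟩ ⟨w, hw, hw₂, rfl⟩
      exact (hwin v hv w hw).2 (hv₂.trans hw₂.symm)
    exact ⟨t, fun v hv hv₂ => ht _ ⟨v, hv, hv₂, rfl⟩⟩

theorem lt_fbar_of_two_mul_maxMatch_le {a b : List σ} {a' b' : List Λ} {L : ℕ} {α β R C J : ℝ}
    (hL : 0 < L) (hR : 0 < R) (hab : 0 < a.length + b.length) (ha' : a'.length = a.length * L)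
    (hb' : b'.length = b.length * L) (hβα : β ≤ α) (hC : C < a.length + b.length)
    (hJ : J ≤ maxApproxMatch a b)
    (h₁ : 2 * (maxMatch a' b' : ℝ) ≤
      (1 - α) * ((a.length + b.length) * L) + 2 * (α - β) * L * J + 2 * (L / R) * C)
    (h₂ : 2 * (maxMatch a' b' : ℝ) ≤ (1 - β) * ((a.length + b.length) * L) + 2 * (L / R) * C) :
    α * ftilde a b + β * (1 - ftilde a b) - 2 / R < fbar a' b' := by
  set N : ℝ := a.length + b.length
  have hN : 0 < N := by simp only [N]; exact_mod_cast hab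
  have hL' : (0 : ℝ) < L := by exact_mod_cast hL
  have hNL : 0 < N * L := mul_pos hN hL'
  have hfbar : fbar a' b' = 1 - 2 * maxMatch a' b' / (N * L) := by
    rw [fbar, ha', hb']; push_cast; rw [← add_mul]
  have hC' : 2 * (L / R) * C < 2 / R * (N * L) := by
    rw [show 2 / R * (N * L) = 2 * (L / R) * N by ring]
    exact mul_lt_mul_of_pos_left hC (by positivity)
  rw [hfbar, ftilde]
  rcases le_total (1 - 2 * (maxApproxMatch a b : ℝ) / N) 0 with hf | hf
  · rw [max_eq_left hf, lt_sub_iff_add_lt, ← lt_sub_iff_add_lt', div_lt_iff₀ hNL]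
    nlinarith
  · rw [max_eq_right hf, lt_sub_iff_add_lt, ← lt_sub_iff_add_lt', div_lt_iff₀ hNL]
    have hK : 2 * (α - β) * L * J ≤ (α - β) * (2 * maxApproxMatch a b / N) * (N * L) := by
      rw [show (α - β) * (2 * maxApproxMatch a b / N) * (N * L) =
        2 * (α - β) * L * maxApproxMatch a b by field_simp]
      exact mul_le_mul_of_nonneg_left hJ (by nlinarith)
    nlinarith

end Paper

namespace Paper.IsMatch

open List

variable {σ Λ : Type*} {L : ℕ} {A B : σ → List Λ} {a b : List σ} {I : List (ℕ × ℕ)}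

theorem two_mul_length_le_of_le_extent (hA : ∀ s, (A s).length = L)
    (hB : ∀ t, (B t).length = L) {P : List (ℕ × ℕ)}
    (hP : IsMatch (a.map A).flatten (b.map B).flatten P) (hne : P ≠ []) (hL : 0 < L) {p q : ℕ}
    (hp : p < a.length) (hq : q < b.length) (hblock : ∀ u ∈ P, u.1 / L = p ∧ u.2 / L = q)
    {γ r : ℝ} (hfb : ∀ C D : List Λ, C <:+: A a[p] → D <:+: B b[q] → r ≤ C.length →
      r ≤ D.length → γ ≤ fbar C D)
    (hx : r ≤ extent (P.map Prod.fst)) (hy : r ≤ extent (P.map Prod.snd)) :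
    2 * (P.length : ℝ) ≤ (1 - γ) * (extent (P.map Prod.fst) + extent (P.map Prod.snd)) := by
  have hfst : (P.map Prod.fst).Pairwise (· < ·) := hP.pairwise.map _ fun _ _ h => h.1
  have hsnd : (P.map Prod.snd).Pairwise (· < ·) := hP.pairwise.map _ fun _ _ h => h.2
  obtain ⟨hi, hiw⟩ := extent_subset_Ico (l := P.map Prod.fst) (by simpa using hne) (N := L) <| by
    simp only [mem_map]; rintro _ ⟨u, hu, rfl⟩; exact mem_Ico_of_div_eq hL (hblock u hu).1
  obtain ⟨hj, hjw⟩ := extent_subset_Ico (l := P.map Prod.snd) (by simpa using hne) (N := L) <| by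
    simp only [mem_map]; rintro _ ⟨u, hu, rfl⟩; exact mem_Ico_of_div_eq hL (hblock u hu).2
  have hC := length_take_drop_flatten_map hA hp hiw
  have hD := length_take_drop_flatten_map hB hq hjw
  have hw : (0 : ℝ) < extent (P.map Prod.fst) := by
    have := length_le_extent hfst
    have := length_pos_iff.2 hne
    simp only [length_map] at *
    exact_mod_cast (by omega : 0 < extent (P.map Prod.fst))
  have hwin := hP.window fun u hu =>
    ⟨(mem_Ico_extent hfst (mem_map_of_mem hu)).1, (mem_Ico_extent hfst (mem_map_of_mem hu)).2,
      (mem_Ico_extent hsnd (mem_map_of_mem hu)).1, (mem_Ico_extent hsnd (mem_map_of_mem hu)).2⟩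
  have := hwin.two_mul_length_le
    (hfb _ _ (take_drop_flatten_map_infix hA hp hi hiw) (take_drop_flatten_map_infix hB hq hj hjw)
      (by rwa [hC]) (by rwa [hD]))
    (by rw [hC, hD]; positivity)
  rwa [length_map, hC, hD] at this

theorem cellBound_staircase (hA : ∀ s, (A s).length = L) (hB : ∀ t, (B t).length = L)
    (hI : IsMatch (a.map A).flatten (b.map B).flatten I) (hL : 0 < L) {α β r : ℝ}
    (hsep : ∀ s ∈ a, ∀ t ∈ b, s ≠ t → ∀ C D : List Λ, C <:+: A s → D <:+: B t →
      r ≤ C.length → r ≤ D.length → α ≤ fbar C D)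
    (hsame : ∀ s ∈ a, ∀ t ∈ b, s = t → ∀ C D : List Λ, C <:+: A s → D <:+: B t →
      r ≤ C.length → r ≤ D.length → β ≤ fbar C D) :
    (hI.staircase hL (length_flatten_map_of_length_eq hA a)
      (length_flatten_map_of_length_eq hB b)).CellBound (fun k => a[k.1]? = b[k.2]?) α β r := by
  set S := hI.staircase hL (length_flatten_map_of_length_eq hA a)
    (length_flatten_map_of_length_eq hB b)
  rintro ⟨p, q⟩ hk
  have hp : p < a.length := S.fst_lt _ hk
  have hq : q < b.length := S.snd_lt _ hk
  have hcell : ∀ {γ : ℝ}, (∀ C D : List Λ, C <:+: A a[p] → D <:+: B b[q] → r ≤ C.length →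
      r ≤ D.length → γ ≤ fbar C D) →
      2 * S.c (p, q) ≤ (1 - γ) * (S.x (p, q) + S.y (p, q)) ∨ S.c (p, q) ≤ r := by
    intro γ hfb
    by_cases hx : r ≤ S.x (p, q)
    · by_cases hy : r ≤ S.y (p, q)
      · refine Or.inl (two_mul_length_le_of_le_extent hA hB (hI.sublist filter_sublist)
          (blockPairs_ne_nil hk) hL hp hq (fun u hu => ?_) hfb hx hy)
        simpa [blockOf] using (mem_blockPairs.1 hu).2
      · exact Or.inr ((S.c_le_y _ hk).trans (not_le.1 hy).le)
    · exact Or.inr ((S.c_le_x _ hk).trans (not_le.1 hx).le)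
  by_cases hpq : a[p] = b[q]
  · rcases hcell (hsame _ (getElem_mem hp) _ (getElem_mem hq) hpq) with h | h
    · exact Or.inl ⟨by simp [getElem?_eq_getElem hp, getElem?_eq_getElem hq, hpq], h⟩
    · exact Or.inr (Or.inr h)
  · exact Or.inr (hcell (hsep _ (getElem_mem hp) _ (getElem_mem hq) hpq))

end Paper.IsMatch

open Paper List

theorem statement11_general {σ Λ : Type*} (L : ℕ) (hL : 0 < L)
    (A B : σ → List Λ) (hA : ∀ s, (A s).length = L) (hB : ∀ t, (B t).length = L)
    (a b : List σ) (α β R : ℝ)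
    (hα' : α < 1/7) (hβ : 0 ≤ β) (hβα : β ≤ α) (hR : 0 < R)
    (hsep : ∀ s ∈ a, ∀ t ∈ b, s ≠ t → ∀ C D : List Λ, C <:+: A s → D <:+: B t →
      (L : ℝ) / R ≤ C.length → (L : ℝ) / R ≤ D.length → α ≤ fbar C D)
    (hsame : ∀ s ∈ a, ∀ t ∈ b, s = t → ∀ C D : List Λ, C <:+: A s → D <:+: B t →
      (L : ℝ) / R ≤ C.length → (L : ℝ) / R ≤ D.length → β ≤ fbar C D) :
    α * ftilde a b + β * (1 - ftilde a b) - 2 / R <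
      fbar ((a.map A).flatten) ((b.map B).flatten) := by
  rcases Nat.eq_zero_or_pos (a.length + b.length) with hab | hab
  · obtain ⟨rfl, rfl⟩ : a = [] ∧ b = [] := by simpa using hab
    simp only [fbar, ftilde, map_nil, flatten_nil, length_nil, CharP.cast_eq_zero, add_zero,
      div_zero, sub_zero, max_eq_right zero_le_one]
    linarith [div_pos two_pos hR]
  obtain ⟨I, hI, hIlen⟩ := exists_isMatch_length_eq_maxMatch (a.map A).flatten (b.map B).flatten
  have ha := length_flatten_map_of_length_eq hA a
  have hb := length_flatten_map_of_length_eq hB b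
  set S := hI.staircase hL ha hb
  have hcell := hI.cellBound_staircase hA hB hL hsep hsame
  have hLR : (0 : ℝ) ≤ L / R := by positivity
  obtain ⟨J, hJ, hJmem, hJwin, h₁⟩ := S.exists_window_chain hβ hβα hα'.le hLR hcell
  have h₂ := S.two_mul_sum_c_le hβα (by linarith) hLR hcell
  have hJK := (isApproxMatch_of_windowCompatible hJ (fun u hu => ⟨S.fst_lt u (hJmem u hu).1,
    S.snd_lt u (hJmem u hu).1, (hJmem u hu).2⟩) hJwin).length_le_maxApproxMatch
  rw [hI.sum_c_staircase, hIlen] at h₁ h₂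
  exact lt_fbar_of_two_mul_maxMatch_le (C := S.cells.card) (J := J.length) hL hR hab ha hb hβα
    (by exact_mod_cast S.card_cells_lt hab) (by exact_mod_cast hJK) h₁ h₂

/-- **Symbol by block replacement.** Let `A, B : Σ → Λ^L` assign to each
symbol a block of length `L`, and let `a, b` be strings over `Σ`. If, for all symbols
`s` of `a` and `t` of `b`, all consecutive substrings `C` of `A s` and `D` of `B t` of
length at least `L/R` satisfy `f̄(C,D) ≥ α` when `s ≠ t` and `f̄(C,D) ≥ β` when `s = t`
(where `0 < α < 1/7`, `0 ≤ β < 1/7`, `β ≤ α`, `R > 0`), then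
`f̄(A(a₁)⋯A(aₙ), B(b₁)⋯B(bₘ)) > α·f̃ + β·(1−f̃) − 2/R` where `f̃ = f̃(a,b)`. -/
theorem statement11 {σ Λ : Type*} (L : ℕ) (hL : 0 < L)
    (A B : σ → List Λ) (hA : ∀ s, (A s).length = L) (hB : ∀ t, (B t).length = L)
    (a b : List σ) (α β R : ℝ)
    (hα : 0 < α) (hα' : α < 1/7) (hβ : 0 ≤ β) (hβ' : β < 1/7) (hβα : β ≤ α) (hR : 0 < R)
    (hsep : ∀ s ∈ a, ∀ t ∈ b, s ≠ t → ∀ C D : List Λ, C <:+: A s → D <:+: B t →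
      (L : ℝ) / R ≤ C.length → (L : ℝ) / R ≤ D.length → α ≤ fbar C D)
    (hsame : ∀ s ∈ a, ∀ t ∈ b, s = t → ∀ C D : List Λ, C <:+: A s → D <:+: B t →
      (L : ℝ) / R ≤ C.length → (L : ℝ) / R ≤ D.length → β ≤ fbar C D) :
    α * ftilde a b + β * (1 - ftilde a b) - 2 / R <
      fbar ((a.map A).flatten) ((b.map B).flatten) :=
  statement11_general L hL A B hA hB a b α β R hα' hβ hβα hR hsep hsame
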